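/- Let f : (0, ∞) → ℂ be a function of the form f(t) = Σ_{n≥1} a(n) e^{−2πnt/√N} + Σ_{n≥1} b(n) e^{2πnt/√N} Γ(1−k, 4πnt/√N), where a(n), b(n) = O(n^μ). Then for Re(s) > μ + 1, ∫₀^∞ f(t) t^{s−1} dt = (√N/2π)^s (Γ(s) Σ a(n) n^{−s} + W_{1−k}(s) Σ b(n) n^{−s}). -/

import Mathlib

open MeasureTheory Real Set Filter Asymptotics

/-- Upper incomplete Gamma function `Γ(ν, x) = ∫_x^∞ t^(ν-1) e^(-t) dt`. -/
noncomputable def Ginc (ν x : ℝ) : ℝ := ∫ t in Set.Ioi x, t ^ (ν - 1) * Real.exp (-t)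

/-- `W_ν(s) = ∫₀^∞ Γ(ν, 2x) e^x x^(s-1) dx`. -/
noncomputable def W (ν : ℝ) (s : ℂ) : ℂ :=
  ∫ x in Set.Ioi (0:ℝ), (Ginc ν (2*x) : ℂ) * (Real.exp x : ℂ) * (x:ℂ) ^ (s - 1)

/-! Each term of the expansion is a dilate `t ↦ g (λₙ t)`, `λₙ = 2πn/√N`, of one of the two
kernels `e^{-x}` and `e^x Γ(1-k, 2x)`, whose Mellin transforms are `Γ(s)` and `W_{1-k}(s)`;
dilation by `λ` multiplies a Mellin transform by `λ^{-s}`. Since `aₙ, bₙ = O(n^μ)`, the series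
`∑ ‖aₙ‖ λₙ^{-Re s}` converges for `Re s > μ + 1`, and this is exactly the summability of the
`L¹` norms that lets sum and integral be exchanged. The second kernel is Mellin convergent because
`Γ(ν, y) ≤ 4^ν Γ(ν) e^{-3y/4}`, so that `e^x Γ(ν, 2x) = O(e^{-x/2})`. -/

theorem MeasureTheory.integrable_tsum_of_summable_integral_norm {α E ι : Type*}
    [MeasurableSpace α] {μ : Measure α} [NormedAddCommGroup E] [CompleteSpace E] [Countable ι]
    {F : ι → α → E} (hF_int : ∀ i, Integrable (F i) μ)
    (hF_sum : Summable fun i ↦ ∫ a, ‖F i a‖ ∂μ) :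
    Integrable (fun a ↦ ∑' i, F i a) μ := by
  have hlint : ∫⁻ a, ∑' i, ‖F i a‖ₑ ∂μ < ⊤ := by
    rw [lintegral_tsum fun i ↦ (hF_int i).1.enorm]
    simp_rw [← ofReal_integral_norm_eq_lintegral_enorm (hF_int _)]
    rw [← ENNReal.ofReal_tsum_of_nonneg (fun i ↦ integral_nonneg fun _ ↦ norm_nonneg _)
      hF_sum]
    exact ENNReal.ofReal_lt_top
  have hsum : ∀ᵐ a ∂μ, Summable fun i ↦ F i a := by
    filter_upwards [ae_lt_top' (AEMeasurable.tsum fun i ↦ (hF_int i).1.enorm) hlint.ne]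
      with a ha
    exact Summable.of_norm (NNReal.summable_coe.2 (ENNReal.tsum_coe_ne_top_iff_summable.1 ha.ne))
  refine ⟨aestronglyMeasurable_of_tendsto_ae (atTop : Filter (Finset ι))
    (f := fun s a ↦ ∑ i ∈ s, F i a) (fun s ↦ ?_) ?_, ?_⟩
  · exact Finset.aestronglyMeasurable_fun_sum s fun i _ ↦ (hF_int i).1
  · filter_upwards [hsum] with a ha using ha.hasSum
  · exact (lintegral_mono fun a ↦ enorm_tsum_le_tsum_enorm).trans_lt hlint

theorem integral_norm_cpow_smul_comp_mul_left {E : Type*} [NormedAddCommGroup E]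
    [NormedSpace ℂ E] (g : ℝ → E) (s : ℂ) {p : ℝ} (hp : 0 < p) :
    ∫ t in Ioi (0 : ℝ), ‖(t : ℂ) ^ (s - 1) • g (p * t)‖
      = p ^ (-s.re) * ∫ t in Ioi (0 : ℝ), ‖(t : ℂ) ^ (s - 1) • g t‖ := by
  have hscale : ∀ t ∈ Ioi (0 : ℝ), ‖((p * t : ℝ) : ℂ) ^ (s - 1) • g (p * t)‖
      = p ^ (s.re - 1) * ‖(t : ℂ) ^ (s - 1) • g (p * t)‖ := fun t (ht : 0 < t) ↦ by
    rw [norm_smul, norm_smul, Complex.norm_cpow_eq_rpow_re_of_pos (mul_pos hp ht),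
      Complex.norm_cpow_eq_rpow_re_of_pos ht, Real.mul_rpow hp.le ht.le, mul_assoc]
    simp
  have h := integral_comp_mul_left_Ioi (fun t ↦ ‖(t : ℂ) ^ (s - 1) • g t‖) 0 hp
  rw [mul_zero, smul_eq_mul, setIntegral_congr_fun measurableSet_Ioi hscale,
    integral_const_mul, Real.rpow_sub_one hp.ne'] at h
  rw [Real.rpow_neg hp.le]
  field_simp at h ⊢
  linear_combination h

theorem hasMellin_tsum_comp_mul_left {ι : Type*} [Countable ι] {a : ι → ℂ} {p : ι → ℝ}
    {g : ℝ → ℂ} {s : ℂ} (hp : ∀ i, 0 < p i) (hg : MellinConvergent g s)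
    (ha : Summable fun i ↦ ‖a i‖ / p i ^ s.re) :
    HasMellin (fun t ↦ ∑' i, a i * g (p i * t)) s
      (mellin g s * ∑' i, a i / (p i : ℂ) ^ s) := by
  set G : ι → ℝ → ℂ := fun i t ↦ (t : ℂ) ^ (s - 1) • (a i * g (p i * t))
  have hG_int (i : ι) : IntegrableOn (G i) (Ioi 0) :=
    ((MellinConvergent.comp_mul_left (hp i)).2 hg).const_smul (a i)
  have hG_norm (i : ι) : ∫ t in Ioi (0 : ℝ), ‖(t : ℂ) ^ (s - 1) • (a i * g (p i * t))‖
      = ‖a i‖ / p i ^ s.re * ∫ t in Ioi (0 : ℝ), ‖(t : ℂ) ^ (s - 1) • g t‖ := by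
    simp_rw [← smul_eq_mul (a := a i), smul_comm _ (a i), norm_smul (a i), integral_const_mul,
      integral_norm_cpow_smul_comp_mul_left g s (hp i), Real.rpow_neg (hp i).le]
    ring
  have hG_sum : Summable fun i ↦ ∫ t in Ioi 0, ‖G i t‖ := by
    simpa only [G, hG_norm] using ha.mul_right _
  have hG_mellin (i : ι) : ∫ t in Ioi 0, G i t = mellin g s * (a i / (p i : ℂ) ^ s) := by
    have := mellin_comp_mul_left g s (hp i)
    simp only [mellin, smul_eq_mul] at this ⊢
    simp only [G, smul_eq_mul, mul_left_comm _ (a i), integral_const_mul, this,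
      Complex.cpow_neg]
    ring
  have hsum :
      (fun t : ℝ ↦ (t : ℂ) ^ (s - 1) • ∑' i, a i * g (p i * t)) = fun t ↦ ∑' i, G i t := by
    ext t
    simp only [G, smul_eq_mul, tsum_mul_left]
  refine ⟨?_, ?_⟩
  · rw [MellinConvergent, hsum]
    exact integrable_tsum_of_summable_integral_norm hG_int hG_sum
  · rw [mellin, hsum, ← integral_tsum_of_summable_integral_norm hG_int hG_sum, ← tsum_mul_left]
    exact tsum_congr hG_mellin

theorem summable_norm_div_rpow_of_isBigO {u : ℕ → ℂ} {μ σ : ℝ}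
    (hu : u =O[atTop] fun n ↦ (n : ℝ) ^ μ) (hσ : μ + 1 < σ) :
    Summable fun n : ℕ ↦ ‖u (n + 1)‖ / ((n : ℝ) + 1) ^ σ := by
  have h : LSeriesSummable u σ :=
    LSeriesSummable_of_isBigO_rpow (x := μ + 1) (by simpa using hσ) (by simpa using hu)
  refine ((summable_nat_add_iff 1).2 h.norm).congr fun n ↦ ?_
  rw [LSeries.norm_term_eq]
  simp

theorem hasMellin_tsum_comp_nat_add_one_div_mul {g : ℝ → ℂ} {s : ℂ} {μ q : ℝ}
    (hq : 0 < q) (hg : MellinConvergent g s) {u : ℕ → ℂ} (hu : u =O[atTop] fun n ↦ (n : ℝ) ^ μ)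
    (hs : μ + 1 < s.re) :
    HasMellin (fun t ↦ ∑' n : ℕ, u (n + 1) * g (((n : ℝ) + 1) / q * t)) s
      ((q : ℂ) ^ s *
        (mellin g s * ∑' n : ℕ, u (n + 1) / (((n : ℝ) + 1 : ℝ) : ℂ) ^ s)) := by
  have hp (n : ℕ) : 0 < ((n : ℝ) + 1) / q := by positivity
  have hsum : Summable fun n : ℕ ↦ ‖u (n + 1)‖ / (((n : ℝ) + 1) / q) ^ s.re := by
    refine ((summable_norm_div_rpow_of_isBigO hu hs).mul_left (q ^ s.re)).congr fun n ↦ ?_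
    rw [Real.div_rpow (by positivity) hq.le]
    field_simp
  obtain ⟨hconv, hval⟩ := hasMellin_tsum_comp_mul_left hp hg hsum
  refine ⟨hconv, hval.trans ?_⟩
  rw [← tsum_mul_left, ← tsum_mul_left, ← tsum_mul_left]
  refine tsum_congr fun n ↦ ?_
  rw [Complex.ofReal_div, Complex.div_cpow_ofReal_nonneg (by positivity) hq.le]
  have : (q : ℂ) ^ s ≠ 0 := by simp [hq.ne']
  field_simp

theorem mellinConvergent_exp_neg {s : ℂ} (hs : 0 < s.re) :
    MellinConvergent (fun x : ℝ ↦ (exp (-x) : ℂ)) s := by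
  simpa only [MellinConvergent, smul_eq_mul, mul_comm] using Complex.GammaIntegral_convergent hs

theorem mellin_exp_neg {s : ℂ} (hs : 0 < s.re) :
    mellin (fun x : ℝ ↦ (exp (-x) : ℂ)) s = Complex.Gamma s := by
  rw [Complex.Gamma_eq_integral hs, Complex.GammaIntegral_eq_mellin]

theorem integrableOn_rpow_mul_exp_neg_mul {a r : ℝ} (ha : 0 < a) (hr : 0 < r) :
    IntegrableOn (fun t : ℝ ↦ t ^ (a - 1) * exp (-(r * t))) (Ioi 0) := by
  simpa [rpow_one, neg_mul] using
    integrableOn_rpow_mul_exp_neg_mul_rpow (s := a - 1) (by linarith) one_pos hr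

theorem integrableOn_rpow_mul_exp_neg_Ioi {ν y : ℝ} (hν : 0 < ν) (hy : 0 ≤ y) :
    IntegrableOn (fun t : ℝ ↦ t ^ (ν - 1) * exp (-t)) (Ioi y) := by
  simpa using (integrableOn_rpow_mul_exp_neg_mul hν one_pos).mono_set (Ioi_subset_Ioi hy)

theorem Ginc_nonneg (ν : ℝ) {y : ℝ} (hy : 0 ≤ y) : 0 ≤ Ginc ν y :=
  setIntegral_nonneg measurableSet_Ioi fun t (ht : y < t) ↦ by
    have : 0 < t := hy.trans_lt ht
    positivity

theorem Ginc_antitoneOn {ν : ℝ} (hν : 0 < ν) : AntitoneOn (Ginc ν) (Ici 0) := by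
  intro y₁ (hy₁ : 0 ≤ y₁) y₂ _ hy
  refine setIntegral_mono_set (integrableOn_rpow_mul_exp_neg_Ioi hν hy₁) ?_
    (Ioi_subset_Ioi hy).eventuallyLE
  filter_upwards [ae_restrict_mem measurableSet_Ioi] with t (ht : y₁ < t)
  have : 0 < t := hy₁.trans_lt ht
  positivity

/-- Split `e^{-t} = e^{-(1-r)t} e^{-rt}` and bound the first factor by its value at `t = y`. -/
theorem Ginc_le {ν r y : ℝ} (hν : 0 < ν) (hr : 0 < r) (hr₁ : r ≤ 1) (hy : 0 ≤ y) :
    Ginc ν y ≤ exp (-((1 - r) * y)) * ((1 / r) ^ ν * Real.Gamma ν) := by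
  have hint := integrableOn_rpow_mul_exp_neg_mul hν hr
  calc Ginc ν y
      ≤ ∫ t in Ioi y, exp (-((1 - r) * y)) * (t ^ (ν - 1) * exp (-(r * t))) := by
        refine setIntegral_mono_on (integrableOn_rpow_mul_exp_neg_Ioi hν hy)
          ((hint.mono_set (Ioi_subset_Ioi hy)).const_mul _) measurableSet_Ioi
          fun t (ht : y < t) ↦ ?_
        have ht₀ : 0 < t := hy.trans_lt ht
        rw [mul_left_comm, ← exp_add]
        gcongr
        nlinarith
    _ = exp (-((1 - r) * y)) * ∫ t in Ioi y, t ^ (ν - 1) * exp (-(r * t)) :=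
        integral_const_mul _ _
    _ ≤ exp (-((1 - r) * y)) * ∫ t in Ioi 0, t ^ (ν - 1) * exp (-(r * t)) := by
        gcongr
        filter_upwards [ae_restrict_mem measurableSet_Ioi] with t (ht : 0 < t)
        positivity
    _ = exp (-((1 - r) * y)) * ((1 / r) ^ ν * Real.Gamma ν) := by
        rw [Real.integral_rpow_mul_exp_neg_mul_Ioi hν hr]

theorem exp_mul_Ginc_two_mul_le {ν x : ℝ} (hν : 0 < ν) (hx : 0 ≤ x) :
    exp x * Ginc ν (2 * x) ≤ 4 ^ ν * Real.Gamma ν * exp (-(x / 2)) := by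
  calc exp x * Ginc ν (2 * x)
      ≤ exp x * (exp (-((1 - 1 / 4) * (2 * x))) * ((1 / (1 / 4)) ^ ν * Real.Gamma ν)) := by
        gcongr
        exact Ginc_le hν (by norm_num) (by norm_num) (by positivity)
    _ = (exp x * exp (-((1 - 1 / 4) * (2 * x)))) * ((1 / (1 / 4)) ^ ν * Real.Gamma ν) := by
        ring
    _ = 4 ^ ν * Real.Gamma ν * exp (-(x / 2)) := by
        rw [← exp_add]
        norm_num
        ring_nf

theorem mellinConvergent_exp_mul_Ginc_two_mul {ν : ℝ} {s : ℂ} (hν : 0 < ν) (hs : 0 < s.re) :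
    MellinConvergent (fun x : ℝ ↦ (exp x : ℂ) * Ginc ν (2 * x)) s := by
  have hanti : AntitoneOn (fun x ↦ Ginc ν (2 * x)) (Ioi 0) :=
    fun x (hx : 0 < x) y (hy : 0 < y) hxy ↦
      Ginc_antitoneOn hν (mem_Ici.2 (by positivity)) (mem_Ici.2 (by positivity)) (by linarith)
  have hmeas : AEStronglyMeasurable (fun x : ℝ ↦ (exp x : ℂ) * Ginc ν (2 * x))
      (volume.restrict (Ioi 0)) :=
    (Complex.continuous_ofReal.comp continuous_exp).aestronglyMeasurable.mul
      (Complex.measurable_ofReal.comp_aemeasurable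
        (aemeasurable_restrict_of_antitoneOn measurableSet_Ioi hanti)).aestronglyMeasurable
  rw [MellinConvergent, mellin_convergent_iff_norm subset_rfl measurableSet_Ioi hmeas]
  refine ((integrableOn_rpow_mul_exp_neg_mul hs (one_half_pos (α := ℝ))).const_mul
    (4 ^ ν * Real.Gamma ν)).mono' ((measurable_id.pow_const _).aestronglyMeasurable.mul
      hmeas.norm) ?_
  filter_upwards [ae_restrict_mem measurableSet_Ioi] with t (ht : 0 < t)
  have hG := Ginc_nonneg ν (by positivity : 0 ≤ 2 * t)
  rw [Real.norm_of_nonneg (by positivity), norm_mul, Complex.norm_real, Complex.norm_real,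
    Real.norm_of_nonneg (exp_pos t).le, Real.norm_of_nonneg hG]
  calc t ^ (s.re - 1) * (exp t * Ginc ν (2 * t))
      ≤ t ^ (s.re - 1) * (4 ^ ν * Real.Gamma ν * exp (-(t / 2))) := by
        exact mul_le_mul_of_nonneg_left (exp_mul_Ginc_two_mul_le hν ht.le) (by positivity)
    _ = 4 ^ ν * Real.Gamma ν * (t ^ (s.re - 1) * exp (-(1 / 2 * t))) := by ring_nf

theorem mellin_exp_mul_Ginc_two_mul (ν : ℝ) (s : ℂ) :
    mellin (fun x : ℝ ↦ (exp x : ℂ) * Ginc ν (2 * x)) s = W ν s := by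
  simp only [mellin, W, smul_eq_mul]
  congr 1 with x
  ring

theorem mellin_transform_of_expansion_general (k μ : ℝ) (N : ℕ) (hN : 0 < N)
    (hk : k < 1) (hμ : 0 ≤ μ)
    (a b : ℕ → ℂ)
    (ha : (fun n : ℕ => a n) =O[atTop] fun n : ℕ => (n:ℝ) ^ μ)
    (hb : (fun n : ℕ => b n) =O[atTop] fun n : ℕ => (n:ℝ) ^ μ)
    (f : ℝ → ℂ)
    (hf : ∀ t : ℝ, 0 < t →
      f t = (∑' n : ℕ, a (n+1) * (Real.exp (-(2 * π * ((n:ℝ)+1) * t / Real.sqrt N)) : ℂ))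
        + ∑' n : ℕ, b (n+1) * (Real.exp (2 * π * ((n:ℝ)+1) * t / Real.sqrt N) : ℂ)
            * (Ginc (1 - k) (4 * π * ((n:ℝ)+1) * t / Real.sqrt N) : ℂ))
    (s : ℂ) (hs : μ + 1 < s.re) :
    (∫ t in Set.Ioi (0:ℝ), f t * (t:ℂ) ^ (s - 1))
      = ((Real.sqrt N / (2 * π) : ℝ) : ℂ) ^ s *
          (Complex.Gamma s * (∑' n : ℕ, a (n+1) / (((n:ℝ) + 1 : ℝ) : ℂ) ^ s)
            + W (1 - k) s * (∑' n : ℕ, b (n+1) / (((n:ℝ) + 1 : ℝ) : ℂ) ^ s)) := by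
  have hsN : 0 < Real.sqrt N := Real.sqrt_pos.2 (by exact_mod_cast hN)
  have hq : 0 < Real.sqrt N / (2 * π) := by positivity
  have hs₀ : 0 < s.re := by linarith
  have hfreq (n : ℕ) (t : ℝ) :
      2 * π * ((n : ℝ) + 1) * t / Real.sqrt N
        = ((n : ℝ) + 1) / (Real.sqrt N / (2 * π)) * t := by
    field_simp
  obtain ⟨hA, hA'⟩ :=
    hasMellin_tsum_comp_nat_add_one_div_mul hq (mellinConvergent_exp_neg hs₀) ha hs
  obtain ⟨hB, hB'⟩ := hasMellin_tsum_comp_nat_add_one_div_mul hq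
    (mellinConvergent_exp_mul_Ginc_two_mul (by linarith : 0 < 1 - k) hs₀) hb hs
  rw [mul_add, ← mellin_exp_neg hs₀, ← mellin_exp_mul_Ginc_two_mul, ← hA', ← hB',
    ← (hasMellin_add hA hB).2]
  refine setIntegral_congr_fun measurableSet_Ioi fun t (ht : 0 < t) ↦ ?_
  rw [hf t ht, smul_eq_mul, mul_comm]
  congr 2 <;> refine tsum_congr fun n ↦ ?_
  · rw [hfreq]
  · rw [mul_assoc, hfreq, show 4 * π * ((n : ℝ) + 1) * t / Real.sqrt N
      = 2 * (2 * π * ((n : ℝ) + 1) * t / Real.sqrt N) by ring, hfreq]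

/-- Mellin transform of
`f(t) = Σ a(n) e^(-2πnt/√N) + Σ b(n) e^(2πnt/√N) Γ(1-k, 4πnt/√N)`:
for `Re s > μ + 1`,
`∫₀^∞ f(t) t^(s-1) dt = (√N/2π)^s (Γ(s) Σ a(n) n^(-s) + W_(1-k)(s) Σ b(n) n^(-s))`. -/
theorem mellin_transform_of_expansion (k μ : ℝ) (N : ℕ) (hN : 0 < N)
    (hk2 : ∃ m : ℤ, k = m / 2) (hk : k < 1) (hμ : 0 ≤ μ)
    (a b : ℕ → ℂ)
    (ha : (fun n : ℕ => a n) =O[atTop] fun n : ℕ => (n:ℝ) ^ μ)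
    (hb : (fun n : ℕ => b n) =O[atTop] fun n : ℕ => (n:ℝ) ^ μ)
    (f : ℝ → ℂ)
    (hf : ∀ t : ℝ, 0 < t →
      f t = (∑' n : ℕ, a (n+1) * (Real.exp (-(2 * π * ((n:ℝ)+1) * t / Real.sqrt N)) : ℂ))
        + ∑' n : ℕ, b (n+1) * (Real.exp (2 * π * ((n:ℝ)+1) * t / Real.sqrt N) : ℂ)
            * (Ginc (1 - k) (4 * π * ((n:ℝ)+1) * t / Real.sqrt N) : ℂ))
    (s : ℂ) (hs : μ + 1 < s.re) :
    (∫ t in Set.Ioi (0:ℝ), f t * (t:ℂ) ^ (s - 1))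
      = ((Real.sqrt N / (2 * π) : ℝ) : ℂ) ^ s *
          (Complex.Gamma s * (∑' n : ℕ, a (n+1) / (((n:ℝ) + 1 : ℝ) : ℂ) ^ s)
            + W (1 - k) s * (∑' n : ℕ, b (n+1) / (((n:ℝ) + 1 : ℝ) : ℂ) ^ s)) :=
  mellin_transform_of_expansion_general k μ N hN hk hμ a b ha hb f hf s hs
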